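/- arXiv:2205.12884 — 8 statements merged into one kernel-verified Lean document; each statement's English description precedes it below -/
import Mathlib

section
/- For positive integers j and k with j odd and j not dividing 2k, the sum ∑_{n=1}^{j} (-1)^n sin(2kπn/j) equals -tan(kπ/j); if j is even the same sum equals 0. -/
open Real Finset

/-!
Put `α = kπ/j`, so that `jα = kπ`. Since `2 cos α sin 2nα = sin (2n+1)α + sin (2n-1)α`, multiplying
the alternating sum by `2 cos α` makes it telescope to `(-1)^j sin (2j+1)α - sin α`, and
`sin (2j+1)α = sin (α + 2kπ) = sin α`. For odd `j` this gives `2 cos α · S = -2 sin α`, and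
`cos α ≠ 0` exactly because `j ∤ 2k`. For even `j` the reflection `n ↦ j - n` keeps the sign
`(-1)^n` and flips the sign of `sin 2nα`, so the sum is its own negative.
-/

theorem two_mul_cos_mul_sum_neg_one_pow_mul_sin (α : ℝ) (j : ℕ) :
    2 * cos α * ∑ n ∈ Icc 1 j, (-1 : ℝ) ^ n * sin (2 * n * α)
      = (-1) ^ j * sin ((2 * j + 1) * α) - sin α := by
  induction j with
  | zero => simp
  | succ j ih =>
    rw [sum_Icc_succ_top (by omega), mul_add, ih]
    have h₁ : (2 * ((j + 1 : ℕ) : ℝ) + 1) * α = 2 * ((j + 1 : ℕ) : ℝ) * α + α := by ring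
    have h₂ : (2 * (j : ℝ) + 1) * α = 2 * ((j + 1 : ℕ) : ℝ) * α - α := by push_cast; ring
    rw [h₁, h₂, sin_add, sin_sub, pow_succ]
    ring

theorem sum_neg_one_pow_mul_sin_of_odd {α : ℝ} {j k : ℕ} (hj : Odd j)
    (hα : j * α = k * π) (hcos : cos α ≠ 0) :
    ∑ n ∈ Icc 1 j, (-1 : ℝ) ^ n * sin (2 * n * α) = -tan α := by
  have hsin : sin ((2 * j + 1) * α) = sin α := by
    rw [show (2 * j + 1) * α = α + k * (2 * π) by linear_combination 2 * hα,
      sin_add_nat_mul_two_pi]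
  have htelescope := two_mul_cos_mul_sum_neg_one_pow_mul_sin α j
  rw [hsin, hj.neg_one_pow] at htelescope
  rw [tan_eq_sin_div_cos, ← neg_div, eq_div_iff hcos]
  linear_combination htelescope / 2

theorem neg_one_pow_sub_of_even {R : Type*} [Ring R] {j n : ℕ} (hj : Even j) (hnj : n ≤ j) :
    (-1 : R) ^ (j - n) = (-1) ^ n := by
  rw [neg_one_pow_eq_pow_mod_two, neg_one_pow_eq_pow_mod_two (n := n)]
  obtain ⟨r, rfl⟩ := hj
  congr 1
  omega

theorem sum_neg_one_pow_mul_sin_of_even {α : ℝ} {j k : ℕ} (hj : Even j)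
    (hα : j * α = k * π) :
    ∑ n ∈ Icc 1 j, (-1 : ℝ) ^ n * sin (2 * n * α) = 0 := by
  set f : ℕ → ℝ := fun n ↦ (-1 : ℝ) ^ n * sin (2 * n * α)
  have hreflect : ∀ n ∈ range (j + 1), f (j - n) = -f n := by
    intro n hn
    have hnj : n ≤ j := Nat.lt_succ_iff.mp (mem_range.mp hn)
    have hsin : sin (2 * ((j - n : ℕ) : ℝ) * α) = -sin (2 * n * α) := by
      rw [Nat.cast_sub hnj, show 2 * ((j : ℝ) - n) * α = k * (2 * π) - 2 * n * α by
        linear_combination 2 * hα, sin_nat_mul_two_pi_sub]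
    simp only [f, neg_one_pow_sub_of_even hj hnj, hsin, mul_neg]
  have hzero : ∑ n ∈ range (j + 1), f n = 0 := by
    have h := sum_range_reflect f (j + 1)
    rw [sum_congr rfl fun n hn ↦ by rw [Nat.add_sub_cancel, hreflect n hn],
      sum_neg_distrib] at h
    linarith
  rwa [range_eq_Ico, sum_eq_sum_Ico_succ_bot j.succ_pos, show f 0 = 0 by simp [f],
    zero_add] at hzero

theorem cos_ne_zero_of_not_dvd {j k : ℕ} (h : ¬ j ∣ 2 * k) : cos (k * π / j) ≠ 0 := by
  rcases eq_or_ne j 0 with rfl | hj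
  · simp
  rw [cos_ne_zero_iff]
  intro n hn
  have hjR : (j : ℝ) ≠ 0 := by exact_mod_cast hj
  have hcast : ((2 * k : ℕ) : ℝ) = ((2 * n + 1) * j : ℤ) := by
    field_simp at hn
    push_cast
    nlinarith [pi_pos]
  exact h (Int.natCast_dvd_natCast.mp (Dvd.intro_left _ (by exact_mod_cast hcast.symm)))

theorem stmt1_general (j k : ℕ) :
    (Odd j → ¬ (j ∣ 2 * k) →
      ∑ n ∈ Finset.Icc 1 j, (-1 : ℝ) ^ n * Real.sin (2 * k * n * π / j)
        = - Real.tan (k * π / j)) ∧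
    (Even j →
      ∑ n ∈ Finset.Icc 1 j, (-1 : ℝ) ^ n * Real.sin (2 * k * n * π / j) = 0) := by
  have harg : ∀ n : ℕ, 2 * k * n * π / j = 2 * n * (k * π / j) := fun n ↦ by ring
  simp only [harg]
  rcases eq_or_ne j 0 with rfl | hj
  · simp
  have hα : (j : ℝ) * (k * π / j) = k * π := mul_div_cancel₀ _ (by exact_mod_cast hj)
  exact ⟨fun hodd hdvd ↦ sum_neg_one_pow_mul_sin_of_odd hodd hα (cos_ne_zero_of_not_dvd hdvd),
    fun heven ↦ sum_neg_one_pow_mul_sin_of_even heven hα⟩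

theorem stmt1 (j k : ℕ) (hj : 0 < j) (hk : 0 < k) :
    (Odd j → ¬ (j ∣ 2 * k) →
      ∑ n ∈ Finset.Icc 1 j, (-1 : ℝ) ^ n * Real.sin (2 * k * n * π / j)
        = - Real.tan (k * π / j)) ∧
    (Even j →
      ∑ n ∈ Finset.Icc 1 j, (-1 : ℝ) ^ n * Real.sin (2 * k * n * π / j) = 0) :=
  stmt1_general j k
end

section
/- Let f : ℝ → ℝ be continuous and let j be a positive even integer. Then (2/π)∫₀^π f(r sin(jx)) sin(jx) dx = (2/π)∫₀^π f_o(r sin x) sin x dx for every real r, where f_o(x) = (f(x) - f(-x))/2 is the odd part of f. -/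
/-!
Put `g x = f (r sin x) sin x`, which is `2π`-periodic. Writing `j = 2k` and substituting
`y = 2x`, the left integral is half of `∫₀^{2π} g (k y) dy`, and the `k`-fold compression of a
period does not change the integral over a period. Shifting the period to `[-π, π]` and folding
it at `0` gives `∫₀^π (g x + g (-x)) dx`, and `g x + g (-x) = (f (r sin x) - f (-r sin x)) sin x`.
-/

open Real MeasureTheory

variable {E : Type*} [NormedAddCommGroup E] [NormedSpace ℝ E] {f : ℝ → E}

theorem intervalIntegral.integral_neg_self_eq_integral_add_comp_neg {a : ℝ}
    (hf : IntervalIntegrable f volume (-a) a) :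
    ∫ x in -a..a, f x = ∫ x in 0..a, (f x + f (-x)) := by
  have hneg : IntervalIntegrable f volume (-a) 0 := hf.mono_set (Set.uIcc_subset_uIcc_left (by
    simp [Set.mem_uIcc, le_total]))
  have hpos : IntervalIntegrable f volume 0 a := hf.mono_set (Set.uIcc_subset_uIcc_right (by
    simp [Set.mem_uIcc, le_total]))
  have hneg_reflected : IntervalIntegrable (fun x => f (-x)) volume 0 a := by
    simpa using (IntervalIntegrable.iff_comp_neg).mp hneg.symm
  rw [← intervalIntegral.integral_add_adjacent_intervals hneg hpos,
    intervalIntegral.integral_add hpos hneg_reflected,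
    intervalIntegral.integral_comp_neg, neg_zero, add_comm]

namespace Function.Periodic

variable {T : ℝ}

theorem intervalIntegral_comp_nat_mul (hf : Periodic f T)
    (h_int : ∀ a b, IntervalIntegrable f volume a b) {n : ℕ} (hn : n ≠ 0) :
    ∫ x in 0..T, f (n * x) = ∫ x in 0..T, f x := by
  have hscaled : (n : ℝ) • ∫ x in 0..T, f (n * x) = (n : ℤ) • ∫ x in 0..T, f x := by
    simpa [natCast_zsmul, nsmul_eq_mul, intervalIntegral.smul_integral_comp_mul_left] using
      hf.intervalIntegral_add_zsmul_eq n 0 h_int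
  rw [natCast_zsmul, ← Nat.cast_smul_eq_nsmul ℝ] at hscaled
  exact smul_right_injective E (Nat.cast_ne_zero.mpr hn) hscaled

end Function.Periodic

theorem stmt2 (f : ℝ → ℝ) (hf : Continuous f) (j : ℕ) (hj : 0 < j) (hje : Even j)
    (r : ℝ) :
    (2 / π) * ∫ x in (0:ℝ)..π, f (r * Real.sin (j * x)) * Real.sin (j * x)
      = (2 / π) * ∫ x in (0:ℝ)..π,
          ((f (r * Real.sin x) - f (-(r * Real.sin x))) / 2) * Real.sin x := by
  obtain ⟨k, rfl⟩ := hje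
  have hk : k ≠ 0 := by omega
  set g : ℝ → ℝ := fun x => f (r * Real.sin x) * Real.sin x with hg
  have hg_int : ∀ a b, IntervalIntegrable g volume a b := fun a b =>
    (by fun_prop : Continuous g).intervalIntegrable a b
  have hg_per : Function.Periodic g (2 * π) := fun x => by simp [hg, Real.sin_add_two_pi]
  have hg_fold : ∀ x, g x + g (-x)
      = 2 * ((f (r * Real.sin x) - f (-(r * Real.sin x))) / 2 * Real.sin x) := fun x => by
    simp only [hg, Real.sin_neg, mul_neg]
    ring
  congr 1
  calc ∫ x in (0:ℝ)..π, g (↑(k + k) * x)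
      = (2:ℝ)⁻¹ * ∫ y in (0:ℝ)..2 * π, g (k * y) := by
        have := intervalIntegral.integral_comp_mul_left (fun y => g (k * y)) (a := 0) (b := π)
          two_ne_zero
        rw [mul_zero] at this
        rw [← smul_eq_mul, ← this]
        push_cast
        ring_nf
    _ = (2:ℝ)⁻¹ * ∫ y in (-π)..π, g y := by
        rw [hg_per.intervalIntegral_comp_nat_mul hg_int hk]
        simpa [two_mul] using congrArg ((2:ℝ)⁻¹ * ·) (hg_per.intervalIntegral_add_eq 0 (-π))
    _ = ∫ x in (0:ℝ)..π, (f (r * Real.sin x) - f (-(r * Real.sin x))) / 2 * Real.sin x := by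
        rw [intervalIntegral.integral_neg_self_eq_integral_add_comp_neg (hg_int _ _)]
        simp only [hg_fold, intervalIntegral.integral_const_mul]
        ring
end

section
/- Let f : ℝ → ℝ be continuous and let j be a positive odd integer. Then (2/π)∫₀^π f(r sin(jx)) sin(jx) dx = (2/π)∫₀^π f_o(r sin x) sin x dx + (1/j)·(2/π)∫₀^π f_e(r sin x) sin x dx for every real r, where f_o and f_e are the odd and even parts of f. -/
open Real

theorem stmt3 (f : ℝ → ℝ) (hf : Continuous f) (j : ℕ) (hj : 0 < j) (hjo : Odd j)
    (r : ℝ) :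
    (2 / π) * ∫ x in (0:ℝ)..π, f (r * Real.sin (j * x)) * Real.sin (j * x)
      = (2 / π) * (∫ x in (0:ℝ)..π,
          ((f (r * Real.sin x) - f (-(r * Real.sin x))) / 2) * Real.sin x)
        + (1 / j) * ((2 / π) * ∫ x in (0:ℝ)..π,
          ((f (r * Real.sin x) + f (-(r * Real.sin x))) / 2) * Real.sin x) := by
  obtain ⟨k, hk⟩ := hjo
  set G : ℝ → ℝ := fun x => f (r * Real.sin x) * Real.sin x with hG
  have hGc : Continuous G := by fun_prop
  have hGint : ∀ t₁ t₂ : ℝ, IntervalIntegrable G MeasureTheory.volume t₁ t₂ :=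
    fun t₁ t₂ => hGc.intervalIntegrable _ _
  have hGper : Function.Periodic G (2 * π) := fun x => by
    simp [hG, Real.sin_add_two_pi]
  have hjne : (j : ℝ) ≠ 0 := by positivity
  have hπ : π ≠ 0 := Real.pi_ne_zero
  set A : ℝ := ∫ x in (0:ℝ)..π, f (r * Real.sin x) * Real.sin x with hA
  set B : ℝ := ∫ x in (0:ℝ)..π, f (-(r * Real.sin x)) * Real.sin x with hB
  -- step 1: substitution u = j * x
  have h1 : (∫ x in (0:ℝ)..π, f (r * Real.sin ((j:ℝ) * x)) * Real.sin ((j:ℝ) * x))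
      = (j : ℝ)⁻¹ * ∫ x in (0:ℝ)..((j:ℝ) * π), G x := by
    have := intervalIntegral.integral_comp_mul_left (a := (0:ℝ)) (b := π) G hjne
    simpa [hG, smul_eq_mul] using this
  -- the integral over one period
  have hper1 : (∫ x in (0:ℝ)..(2*π), G x) = A - B := by
    have hsplit : (∫ x in (0:ℝ)..(2*π), G x)
        = (∫ x in (0:ℝ)..π, G x) + ∫ x in π..(2*π), G x := by
      rw [intervalIntegral.integral_add_adjacent_intervals (hGint _ _) (hGint _ _)]
    have hshift : (∫ x in π..(2*π), G x) = ∫ x in (0:ℝ)..π, G (x + π) := by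
      rw [intervalIntegral.integral_comp_add_right]
      norm_num [two_mul]
    have hval : (∫ x in (0:ℝ)..π, G (x + π)) = -B := by
      rw [← intervalIntegral.integral_neg]
      apply intervalIntegral.integral_congr
      intro x _
      simp [hG, Real.sin_add_pi]
    have hGA : (∫ x in (0:ℝ)..π, G x) = A := rfl
    rw [hsplit, hshift, hval, hGA]
    ring
  -- integral over [0, 2kπ]
  have h2k : (∫ x in (0:ℝ)..((2*k:ℕ):ℝ) * π, G x) = (k : ℝ) * (A - B) := by
    have h := hGper.intervalIntegral_add_zsmul_eq (k : ℤ) 0 hGint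
    simp only [zero_add] at h
    rw [show ((k:ℤ) • (2*π) : ℝ) = ((2*k:ℕ):ℝ) * π by
      simp [zsmul_eq_mul]; ring] at h
    rw [h, hper1]
    simp [zsmul_eq_mul]
  -- integral over [2kπ, (2k+1)π]
  have h2k1 : (∫ x in ((2*k:ℕ):ℝ) * π..((j:ℝ) * π), G x) = A := by
    have hper' : Function.Periodic G ((k : ℕ) • (2 * π)) := hGper.nsmul k
    have : (∫ x in (0:ℝ)..π, G x) = ∫ x in (0:ℝ)..π, G (x + (k:ℕ) • (2*π)) := by
      apply intervalIntegral.integral_congr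
      intro x _
      exact (hper' x).symm
    rw [hA]
    conv_lhs => rw [show ((2*k:ℕ):ℝ) * π = 0 + (k:ℕ) • (2*π) by simp [nsmul_eq_mul]; push_cast; ring,
      show (j:ℝ) * π = π + (k:ℕ) • (2*π) by simp [nsmul_eq_mul]; rw [hk]; push_cast; ring]
    rw [← intervalIntegral.integral_comp_add_right G ((k:ℕ) • (2*π)), ← this]
  -- full integral
  have h3 : (∫ x in (0:ℝ)..((j:ℝ) * π), G x) = (k : ℝ) * (A - B) + A := by
    rw [← intervalIntegral.integral_add_adjacent_intervals (a := (0:ℝ))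
      (b := ((2*k:ℕ):ℝ) * π) (c := (j:ℝ) * π) (hGint _ _) (hGint _ _), h2k, h2k1]
  -- RHS integrals
  have hRo : (∫ x in (0:ℝ)..π,
      ((f (r * Real.sin x) - f (-(r * Real.sin x))) / 2) * Real.sin x)
      = (A - B) / 2 := by
    have : ∀ x ∈ Set.uIcc (0:ℝ) π,
        ((f (r * Real.sin x) - f (-(r * Real.sin x))) / 2) * Real.sin x
        = (1/2) * (f (r * Real.sin x) * Real.sin x)
          - (1/2) * (f (-(r * Real.sin x)) * Real.sin x) := by
      intro x _; ring
    rw [intervalIntegral.integral_congr this, intervalIntegral.integral_sub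
      ((by fun_prop : Continuous fun x => (1/2) * (f (r * Real.sin x) * Real.sin x)).intervalIntegrable _ _)
      ((by fun_prop : Continuous fun x => (1/2) * (f (-(r * Real.sin x)) * Real.sin x)).intervalIntegrable _ _),
      intervalIntegral.integral_const_mul, intervalIntegral.integral_const_mul, hA, hB]
    ring
  have hRe : (∫ x in (0:ℝ)..π,
      ((f (r * Real.sin x) + f (-(r * Real.sin x))) / 2) * Real.sin x)
      = (A + B) / 2 := by
    have : ∀ x ∈ Set.uIcc (0:ℝ) π,
        ((f (r * Real.sin x) + f (-(r * Real.sin x))) / 2) * Real.sin x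
        = (1/2) * (f (r * Real.sin x) * Real.sin x)
          + (1/2) * (f (-(r * Real.sin x)) * Real.sin x) := by
      intro x _; ring
    rw [intervalIntegral.integral_congr this, intervalIntegral.integral_add
      ((by fun_prop : Continuous fun x => (1/2) * (f (r * Real.sin x) * Real.sin x)).intervalIntegrable _ _)
      ((by fun_prop : Continuous fun x => (1/2) * (f (-(r * Real.sin x)) * Real.sin x)).intervalIntegrable _ _),
      intervalIntegral.integral_const_mul, intervalIntegral.integral_const_mul, hA, hB]
    ring
  rw [h1, h3, hRo, hRe]
  have hjk : (j : ℝ) = 2 * k + 1 := by rw [hk]; push_cast; ring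
  rw [hjk]
  have hk1 : (2 * (k:ℝ) + 1) ≠ 0 := by positivity
  field_simp
  ring
end

section
/- For a positive even integer j, a positive integer k, and any nonzero real r, (2/π)∫₀^π H(r sin(jx)) sin²(kx) dx = 1/2, where H is the Heaviside step function (H(s)=1 for s>0, H(s)=0 for s<0, H(0)=1). -/
/-!
For even `j`, the reflection `x ↦ π - x` flips the sign of `sin (j x)` and preserves `sin (k x) ^ 2`.
Off the null set where `sin (j x) = 0`, exactly one of `H (r sin (j x))` and `H (r sin (j (π - x)))`
equals `1`, so the integrand and its reflection add up to `sin (k x) ^ 2`. Hence twice the integral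
is `∫₀^π sin (k x) ^ 2 = π / 2`.
-/

open Real MeasureTheory

noncomputable def heaviside (s : ℝ) : ℝ := if 0 ≤ s then 1 else 0

lemma measurable_heaviside : Measurable heaviside :=
  Measurable.ite measurableSet_Ici measurable_const measurable_const

lemma norm_heaviside_le_one (s : ℝ) : ‖heaviside s‖ ≤ 1 := by
  unfold heaviside; split_ifs <;> norm_num

lemma heaviside_add_heaviside_neg {s : ℝ} (hs : s ≠ 0) : heaviside s + heaviside (-s) = 1 := by
  unfold heaviside
  rcases hs.lt_or_gt with h | h
  · rw [if_neg h.not_ge, if_pos (by linarith)]; norm_num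
  · rw [if_pos h.le, if_neg (by linarith)]; norm_num

lemma intervalIntegrable_heaviside_comp {g : ℝ → ℝ} (hg : Measurable g) (a b : ℝ) :
    IntervalIntegrable (fun x => heaviside (g x)) volume a b :=
  (intervalIntegrable_const (c := (1 : ℝ))).mono_fun
    (measurable_heaviside.comp hg).aestronglyMeasurable
    (Filter.Eventually.of_forall fun x => by simpa using norm_heaviside_le_one (g x))

theorem intervalIntegral.two_nsmul_integral_eq_of_add_comp_sub {E : Type*} [NormedAddCommGroup E]
    [NormedSpace ℝ E] {f g : ℝ → E} {a b : ℝ} (hf : IntervalIntegrable f volume a b)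
    (hfg : ∀ᵐ x, x ∈ Set.uIoc a b → f x + f (a + b - x) = g x) :
    2 • ∫ x in a..b, f x = ∫ x in a..b, g x := by
  have hreflect : ∫ x in a..b, f (a + b - x) = ∫ x in a..b, f x := by
    rw [integral_comp_sub_left]; congr 1 <;> ring
  have hf' : IntervalIntegrable (fun x => f (a + b - x)) volume a b := by
    simpa using (hf.comp_sub_left (a + b)).symm
  rw [two_nsmul, ← integral_congr_ae hfg, integral_add hf hf', hreflect]

lemma ae_sin_mul_ne_zero {c : ℝ} (hc : c ≠ 0) : ∀ᵐ x, sin (c * x) ≠ 0 := by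
  refine measure_eq_zero_iff_ae_notMem.mp (Set.Countable.measure_zero ?_ _)
  refine (Set.countable_range fun n : ℤ => n * π / c).mono fun x hx => ?_
  obtain ⟨n, hn⟩ := sin_eq_zero_iff.mp hx
  exact ⟨n, by field_simp; linarith⟩

lemma sin_sq_nat_mul_pi_sub (k : ℕ) (x : ℝ) : sin (k * (π - x)) ^ 2 = sin (k * x) ^ 2 := by
  rw [mul_sub, sin_nat_mul_pi_sub, neg_sq, mul_pow, ← pow_mul, (even_two.mul_left k).neg_one_pow,
    one_mul]

lemma sin_even_mul_pi_sub {j : ℕ} (hj : Even j) (x : ℝ) : sin (j * (π - x)) = -sin (j * x) := by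
  rw [mul_sub, sin_nat_mul_pi_sub, hj.neg_one_pow, one_mul]

lemma integral_sin_nat_mul_sq {k : ℕ} (hk : k ≠ 0) : ∫ x in 0..π, sin (k * x) ^ 2 = π / 2 := by
  have hk' : (k : ℝ) ≠ 0 := by exact_mod_cast hk
  rw [intervalIntegral.integral_comp_mul_left (fun x => sin x ^ 2) hk', integral_sin_sq]
  simp only [mul_zero, sin_zero, cos_zero, mul_one, sin_nat_mul_pi, zero_mul, sub_self, zero_add,
    sub_zero, smul_eq_mul]
  field_simp

theorem stmt5 (j k : ℕ) (hj : 0 < j) (hje : Even j) (hk : 0 < k) (r : ℝ) (hr : r ≠ 0) :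
    (2 / π) * ∫ x in (0:ℝ)..π,
        (if 0 ≤ r * Real.sin (j * x) then (1:ℝ) else 0) * Real.sin (k * x) ^ 2 = 1 / 2 := by
  let f : ℝ → ℝ := fun x => heaviside (r * sin (j * x)) * sin (k * x) ^ 2
  have hf : IntervalIntegrable f volume 0 π :=
    (intervalIntegrable_heaviside_comp (by fun_prop) 0 π).mul_continuousOn (by fun_prop)
  have hsym : ∀ᵐ x, x ∈ Set.uIoc 0 π → f x + f (0 + π - x) = sin (k * x) ^ 2 := by
    filter_upwards [ae_sin_mul_ne_zero (c := j) (by positivity)] with x hx _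
    simp only [f, zero_add, sin_even_mul_pi_sub hje, sin_sq_nat_mul_pi_sub, mul_neg, ← add_mul,
      heaviside_add_heaviside_neg (mul_ne_zero hr hx), one_mul]
  have htwice := intervalIntegral.two_nsmul_integral_eq_of_add_comp_sub hf hsym
  rw [integral_sin_nat_mul_sq hk.ne', nsmul_eq_mul] at htwice
  show 2 / π * ∫ x in (0:ℝ)..π, f x = 1 / 2
  field_simp
  linarith
end

section
/- For a positive odd integer j, a positive integer k with j not dividing 2k, and any real r > 0, (2/π)∫₀^π H(r sin(jx)) sin²(kx) dx = (1/2)·[1 + 1/j - tan(kπ/j)/(kπ)], where H is the Heaviside function. -/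
open Real Finset

section helpers

lemma aux1 (a φ : ℝ) :
    (sin (a + 2*φ) - sin a) * sin (2*φ) = sin φ * (sin (a + 3*φ) - sin (a - φ)) := by
  rw [show a + 2*φ = a + φ + φ by ring, show a + 3*φ = a + φ + φ + φ by ring,
    show (2:ℝ)*φ = φ + φ by ring, sin_sub]
  simp only [sin_add, cos_add]
  linear_combination (Real.sin a * Real.cos φ * Real.sin φ + Real.cos a * Real.sin φ^2) *
    (Real.sin_sq_add_cos_sq φ)

lemma tele (φ : ℝ) : ∀ M : ℕ,
    (∑ t ∈ range (M+1), (sin ((2*(t:ℝ)+1)*(2*φ)) - sin ((2*(t:ℝ))*(2*φ)))) * sin (2*φ)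
      = sin φ * (sin ((4*(M:ℝ)+3)*φ) + sin φ) := by
  intro M
  induction M with
  | zero =>
      simp only [zero_add, range_one, sum_singleton, Nat.cast_zero]
      have e1 : ((2:ℝ)*0+1)*(2*φ) = 0 + 2*φ := by ring
      have e2 : (2:ℝ)*0*(2*φ) = 0 := by ring
      have e3 : ((4:ℝ)*0+3)*φ = 0 + 3*φ := by ring
      rw [e1, e2, e3, sin_zero]
      have h := aux1 0 φ
      rw [zero_sub, sin_neg, sin_zero] at h
      linear_combination h
  | succ M ih =>
      rw [sum_range_succ, add_mul, ih]
      have h := aux1 ((4*(M:ℝ)+4)*φ) φ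
      push_cast
      have e1 : (2*((M:ℝ)+1)+1)*(2*φ) = (4*(M:ℝ)+4)*φ + 2*φ := by ring
      have e2 : (2*((M:ℝ)+1))*(2*φ) = (4*(M:ℝ)+4)*φ := by ring
      have e3 : (4*(M:ℝ)+4)*φ + 3*φ = (4*((M:ℝ)+1)+3)*φ := by ring
      have e4 : (4*(M:ℝ)+4)*φ - φ = (4*(M:ℝ)+3)*φ := by ring
      rw [e1, e2]
      rw [e3, e4] at h
      linarith [h]

lemma sum_even (A : ℕ → ℝ) : ∀ M : ℕ,
    ∑ m ∈ range (2*M+1), (if Even m then A m else 0) = ∑ t ∈ range (M+1), A (2*t) := by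
  intro M
  induction M with
  | zero => simp
  | succ M ih =>
      have h1 : ¬ Even (2*M+1) := by simp [Nat.even_add_one]
      have h2 : Even (2*M+1+1) := ⟨M+1, by ring⟩
      rw [show 2*(M+1)+1 = (2*M+1)+1+1 by ring, sum_range_succ, sum_range_succ, ih,
        if_neg h1, if_pos h2, add_zero, sum_range_succ (f := fun t => A (2*t)) (n := M+1),
        show 2*(M+1) = 2*M+1+1 by ring]

end helpers

set_option maxHeartbeats 1000000 in
theorem stmt6 (j k : ℕ) (hj : 0 < j) (hjo : Odd j) (hk : 0 < k) (hdvd : ¬ (j ∣ 2 * k))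
    (r : ℝ) (hr : 0 < r) :
    (2 / π) * ∫ x in (0:ℝ)..π,
        (if 0 ≤ r * Real.sin (j * x) then (1:ℝ) else 0) * Real.sin (k * x) ^ 2
      = (1 / 2) * (1 + 1 / j - Real.tan (k * π / j) / (k * π)) := by
  have hπ : (0:ℝ) < π := pi_pos
  have hπ0 : (π:ℝ) ≠ 0 := ne_of_gt hπ
  have hj' : (0:ℝ) < (j:ℝ) := by exact_mod_cast hj
  have hk' : (0:ℝ) < (k:ℝ) := by exact_mod_cast hk
  have hknz : (k:ℝ) ≠ 0 := ne_of_gt hk'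
  have hjnz : (j:ℝ) ≠ 0 := ne_of_gt hj'
  set c : ℝ := π / j with hc_def
  have hc : 0 < c := div_pos hπ hj'
  set φ : ℝ := (k:ℝ) * π / (j:ℝ) with hφ_def
  have hφc : φ = (k:ℝ) * c := by rw [hφ_def, hc_def]; ring
  have hjc : (j:ℝ) * c = π := by rw [hc_def]; field_simp
  set f : ℝ → ℝ :=
    fun x => (if 0 ≤ r * Real.sin (j * x) then (1:ℝ) else 0) * Real.sin (k * x) ^ 2 with hf
  -- nonvanishing of sin φ and cos φ
  have hsφ : Real.sin φ ≠ 0 := by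
    intro h
    rw [Real.sin_eq_zero_iff] at h
    obtain ⟨n, hn⟩ := h
    have h2 : (n:ℝ) * (j:ℝ) = (k:ℝ) := by
      rw [hφ_def] at hn
      field_simp at hn
      nlinarith [hn]
    have h3 : (n * (j:ℤ) : ℤ) = (k:ℤ) := by exact_mod_cast h2
    have h4 : (j:ℤ) ∣ (k:ℤ) := Dvd.intro_left n h3
    have h5 : j ∣ k := by exact_mod_cast h4
    exact hdvd (h5.mul_left 2)
  have hcφ : Real.cos φ ≠ 0 := by
    intro h
    rw [Real.cos_eq_zero_iff] at h
    obtain ⟨n, hn⟩ := h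
    have h2 : (2*(k:ℝ)) = (j:ℝ) * (2*(n:ℝ)+1) := by
      rw [hφ_def] at hn
      field_simp at hn
      nlinarith [hn]
    have h3 : ((2*k : ℕ) : ℤ) = (j:ℤ) * (2*n+1) := by push_cast; exact_mod_cast h2
    have h4 : (j:ℤ) ∣ ((2*k : ℕ) : ℤ) := Dvd.intro _ h3.symm
    exact hdvd (by exact_mod_cast h4)
  -- integrability
  have hint : ∀ p q : ℝ, IntervalIntegrable f MeasureTheory.volume p q := by
    intro p q
    apply IntervalIntegrable.mono_fun' (g := fun _ => (1:ℝ)) intervalIntegrable_const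
    · apply Measurable.aestronglyMeasurable
      apply Measurable.mul
      · exact Measurable.ite (measurableSet_le measurable_const (by fun_prop))
          measurable_const measurable_const
      · fun_prop
    · filter_upwards with x
      simp only [hf]
      have h1 : ‖(if 0 ≤ r * Real.sin (j*x) then (1:ℝ) else 0)‖ ≤ 1 := by
        split <;> norm_num
      have h2 : ‖Real.sin ((k:ℝ)*x)^2‖ ≤ 1 := by
        rw [Real.norm_eq_abs, abs_of_nonneg (sq_nonneg _)]
        exact Real.sin_sq_le_one _
      calc ‖(if 0 ≤ r * Real.sin (j*x) then (1:ℝ) else 0) * Real.sin ((k:ℝ)*x)^2‖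
          = ‖(if 0 ≤ r * Real.sin (j*x) then (1:ℝ) else 0)‖ * ‖Real.sin ((k:ℝ)*x)^2‖ :=
            norm_mul _ _
        _ ≤ 1 * 1 := mul_le_mul h1 h2 (norm_nonneg _) zero_le_one
        _ = 1 := by norm_num
  -- splitting the integral
  have hsplit : (∫ x in (0:ℝ)..π, f x)
      = ∑ m ∈ Finset.range j, ∫ x in (((m:ℕ):ℝ)*c)..(((m+1:ℕ):ℝ)*c), f x := by
    have h := intervalIntegral.sum_integral_adjacent_intervals
      (a := fun m : ℕ => ((m:ℕ):ℝ)*c) (μ := MeasureTheory.volume) (n := j)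
      (fun i _ => hint _ _)
    rw [h]
    norm_num [hjc]
  -- evaluating each piece
  have hpiece : ∀ m : ℕ, (∫ x in ((m:ℝ)*c)..(((m:ℝ)+1)*c), f x)
      = (if Even m then
          (c/2 + (Real.sin (2*(m:ℝ)*φ) - Real.sin (2*((m:ℝ)+1)*φ))/(4*(k:ℝ))) else 0) := by
    intro m
    have hab : (m:ℝ)*c < ((m:ℝ)+1)*c := by
      have : (0:ℝ) ≤ (m:ℝ) := Nat.cast_nonneg m
      nlinarith
    have hg : (∫ x in ((m:ℝ)*c)..(((m:ℝ)+1)*c), f x)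
        = ∫ x in ((m:ℝ)*c)..(((m:ℝ)+1)*c), (if Even m then Real.sin ((k:ℝ)*x)^2 else 0) := by
      apply intervalIntegral.integral_congr_ae
      have h0 : (MeasureTheory.volume : MeasureTheory.Measure ℝ) {(((m:ℝ)+1)*c)} = 0 :=
        MeasureTheory.measure_singleton _
      filter_upwards [MeasureTheory.compl_mem_ae_iff.mpr h0] with x hx hmem
      simp only [Set.mem_compl_iff, Set.mem_singleton_iff] at hx
      rw [Set.uIoc_of_le hab.le] at hmem
      have h1 : (m:ℝ)*c < x := hmem.1
      have h2 : x < ((m:ℝ)+1)*c := lt_of_le_of_ne hmem.2 hx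
      have hy1 : 0 < (j:ℝ)*x - (m:ℝ)*π := by nlinarith [hjc]
      have hy2 : (j:ℝ)*x - (m:ℝ)*π < π := by nlinarith [hjc]
      have hsin : Real.sin ((j:ℝ)*x) = (-1:ℝ)^m * Real.sin ((j:ℝ)*x - (m:ℝ)*π) := by
        have h3 := Real.sin_add_int_mul_pi ((j:ℝ)*x - (m:ℝ)*π) (m:ℤ)
        rw [zpow_natCast] at h3
        rw [Int.cast_natCast] at h3
        rw [sub_add_cancel] at h3
        linear_combination h3
      have hspos : 0 < Real.sin ((j:ℝ)*x - (m:ℝ)*π) := Real.sin_pos_of_pos_of_lt_pi hy1 hy2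
      simp only [hf]
      rcases Nat.even_or_odd m with he | ho
      · have hpos : 0 ≤ r * Real.sin ((j:ℝ)*x) := by
          rw [hsin, he.neg_one_pow, one_mul]
          exact le_of_lt (mul_pos hr hspos)
        rw [if_pos hpos, if_pos he, one_mul]
      · have hne : ¬ Even m := Nat.not_even_iff_odd.mpr ho
        have hneg : r * Real.sin ((j:ℝ)*x) < 0 := by
          rw [hsin, ho.neg_one_pow]
          nlinarith
        rw [if_neg (not_le.mpr hneg), if_neg hne, zero_mul]
    rw [hg]
    rcases Nat.even_or_odd m with he | ho
    · simp only [he, if_true]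
      have hcomp := intervalIntegral.integral_comp_mul_left
        (a := (m:ℝ)*c) (b := ((m:ℝ)+1)*c) (fun u => Real.sin u ^ 2) hknz
      rw [hcomp, integral_sin_sq, smul_eq_mul]
      have e3 : Real.sin (2*(m:ℝ)*φ)
          = 2*Real.sin ((k:ℝ)*((m:ℝ)*c))*Real.cos ((k:ℝ)*((m:ℝ)*c)) := by
        rw [show 2*(m:ℝ)*φ = 2*((k:ℝ)*((m:ℝ)*c)) by rw [hφc]; ring, Real.sin_two_mul]
      have e4 : Real.sin (2*((m:ℝ)+1)*φ)
          = 2*Real.sin ((k:ℝ)*(((m:ℝ)+1)*c))*Real.cos ((k:ℝ)*(((m:ℝ)+1)*c)) := by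
        rw [show 2*((m:ℝ)+1)*φ = 2*((k:ℝ)*(((m:ℝ)+1)*c)) by rw [hφc]; ring, Real.sin_two_mul]
      rw [e3, e4]
      field_simp
      ring
    · have hne : ¬ Even m := Nat.not_even_iff_odd.mpr ho
      simp only [hne, if_false]
      simp
  -- put things together
  obtain ⟨M, hM⟩ : ∃ M, j = 2*M + 1 := by
    obtain ⟨M, hM⟩ := hjo; exact ⟨M, by omega⟩
  have hj2 : (j:ℝ) = 2*(M:ℝ)+1 := by rw [hM]; push_cast; ring
  have hsum : (∫ x in (0:ℝ)..π, f x)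
      = ∑ t ∈ range (M+1),
          (c/2 + (Real.sin (2*((2*t:ℕ):ℝ)*φ) - Real.sin (2*(((2*t:ℕ):ℝ)+1)*φ))/(4*(k:ℝ))) := by
    rw [hsplit, hM]
    rw [← sum_even (fun m => c/2 + (Real.sin (2*(m:ℝ)*φ) - Real.sin (2*((m:ℝ)+1)*φ))/(4*(k:ℝ))) M]
    apply Finset.sum_congr rfl
    intro m _
    rw [show ((m+1:ℕ):ℝ) = (m:ℝ)+1 by push_cast; ring]
    exact hpiece m
  -- the trig sum
  set S : ℝ := ∑ t ∈ range (M+1),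
      (Real.sin ((2*(t:ℝ)+1)*(2*φ)) - Real.sin ((2*(t:ℝ))*(2*φ))) with hS_def
  have hsum2 : (∫ x in (0:ℝ)..π, f x) = ((M:ℝ)+1)*(c/2) - S/(4*(k:ℝ)) := by
    rw [hsum]
    have hterm : ∀ t : ℕ,
        (c/2 + (Real.sin (2*((2*t:ℕ):ℝ)*φ) - Real.sin (2*(((2*t:ℕ):ℝ)+1)*φ))/(4*(k:ℝ)))
        = c/2 - (Real.sin ((2*(t:ℝ)+1)*(2*φ)) - Real.sin ((2*(t:ℝ))*(2*φ)))/(4*(k:ℝ)) := by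
      intro t
      push_cast
      rw [show 2*(2*(t:ℝ))*φ = (2*(t:ℝ))*(2*φ) by ring,
        show 2*(2*(t:ℝ)+1)*φ = (2*(t:ℝ)+1)*(2*φ) by ring]
      ring
    rw [Finset.sum_congr rfl (fun t _ => hterm t), Finset.sum_sub_distrib, Finset.sum_const,
      card_range, nsmul_eq_mul, ← Finset.sum_div, ← hS_def]
    push_cast
    ring
  have h43 : Real.sin ((4*(M:ℝ)+3)*φ) = Real.sin φ := by
    have e : (4*(M:ℝ)+3)*φ = φ + (k:ℕ)*(2*π) := by
      rw [hφ_def, hj2]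
      field_simp
      ring
    rw [e, Real.sin_add_nat_mul_two_pi]
  have hS : S = Real.tan φ := by
    have h := tele φ M
    rw [← hS_def, h43, Real.sin_two_mul] at h
    have h5 : Real.sin φ * (2*(S * Real.cos φ - Real.sin φ)) = 0 := by linear_combination h
    rcases mul_eq_zero.mp h5 with h6 | h6
    · exact absurd h6 hsφ
    · rw [Real.tan_eq_sin_div_cos]
      field_simp
      linarith
  rw [hsum2, hS]
  rw [Real.tan_eq_sin_div_cos]
  rw [hc_def, hj2]
  field_simp
  ring
end

section
/- Let r₀ ∈ ℝ, let f : ℝ → ℝ be continuous, continuously differentiable on ℝ \ {r₀} with sup_{x ≠ r₀} |f'(x)| < ∞. Let u ∈ C¹(ℝ²) (as a function of (x,p)), w ∈ L^∞([a,b]), and define G(p) = ∫_a^b f(u(x,p)) w(x) dx. If for each p the equation u(x,p) = r₀ has at most finitely many solutions x ∈ [a,b], then G is continuously differentiable on ℝ with G'(p) = ∫_a^b f'(u(x,p)) ∂u/∂p(x,p) w(x) dx. -/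
open Real

/-!
Since `f'` is bounded off the single point `r₀`, the mean value theorem on each side of `r₀`
makes `f` Lipschitz. Together with the local boundedness of `∂ₚu`, this makes
`p ↦ f (u x p) * w x` Lipschitz near any `p₀`, uniformly in `x`. It is also differentiable at
`p₀` for all `x` outside the finite, hence null, set where `u x p₀ = r₀`. Differentiation under the
integral sign for Lipschitz integrands then gives the formula for `G'`. The same null-set
argument, with `f'` continuous off `r₀`, and dominated convergence make `G'` continuous.
-/

open Set MeasureTheory Metric Function
open scoped NNReal Interval

theorem abs_sub_le_mul_of_abs_deriv_le_Ioo {f : ℝ → ℝ} {x y C : ℝ} (hxy : x ≤ y)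
    (hf : ContinuousOn f (Icc x y)) (hd : ∀ c ∈ Ioo x y, DifferentiableAt ℝ f c)
    (hC : ∀ c ∈ Ioo x y, |deriv f c| ≤ C) : |f y - f x| ≤ C * (y - x) := by
  rcases hxy.eq_or_lt with rfl | hlt
  · simp
  obtain ⟨c, hc, hslope⟩ :=
    exists_deriv_eq_slope f hlt hf fun c hc => (hd c hc).differentiableWithinAt
  rw [eq_div_iff (sub_ne_zero.2 hlt.ne')] at hslope
  rw [← hslope, abs_mul, abs_of_pos (sub_pos.2 hlt)]
  exact mul_le_mul_of_nonneg_right (hC c hc) (sub_pos.2 hlt).le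

theorem lipschitzWith_of_abs_deriv_le_of_ne {f : ℝ → ℝ} {r₀ C : ℝ} (hf : Continuous f)
    (hd : ∀ x ≠ r₀, DifferentiableAt ℝ f x) (hC : ∀ x ≠ r₀, |deriv f x| ≤ C) :
    LipschitzWith (Real.toNNReal C) f := by
  have off : ∀ {s t}, s ≤ t → r₀ ∉ Ioo s t → |f t - f s| ≤ C * (t - s) := fun hst h =>
    abs_sub_le_mul_of_abs_deriv_le_Ioo hst hf.continuousOn
      (fun c hc => hd c (ne_of_mem_of_not_mem hc h))
      (fun c hc => hC c (ne_of_mem_of_not_mem hc h))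
  have hle : ∀ x y, x ≤ y → |f y - f x| ≤ C * (y - x) := by
    intro x y hxy
    by_cases h : r₀ ∈ Ioo x y
    · calc |f y - f x| ≤ |f y - f r₀| + |f r₀ - f x| := abs_sub_le _ _ _
        _ ≤ C * (y - r₀) + C * (r₀ - x) :=
          add_le_add (off h.2.le fun h' => h'.1.false) (off h.1.le fun h' => h'.2.false)
        _ = C * (y - x) := by ring
    · exact off hxy h
  refine LipschitzWith.of_dist_le_mul fun x y => ?_
  rw [Real.coe_toNNReal', dist_eq, dist_eq]
  rcases le_total x y with hxy | hxy
  · rw [abs_sub_comm, abs_sub_comm x, abs_of_nonneg (sub_nonneg.2 hxy)]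
    exact (hle x y hxy).trans (mul_le_mul_of_nonneg_right (le_max_left _ _) (sub_nonneg.2 hxy))
  · rw [abs_of_nonneg (sub_nonneg.2 hxy)]
    exact (hle y x hxy).trans (mul_le_mul_of_nonneg_right (le_max_left _ _) (sub_nonneg.2 hxy))

theorem IsCompact.exists_nnreal_bound_prod {α β E : Type*} [TopologicalSpace α]
    [TopologicalSpace β] [NormedAddCommGroup E] {g : α × β → E} (hg : Continuous g) {s : Set α}
    {t : Set β} (hs : IsCompact s) (ht : IsCompact t) :
    ∃ M : ℝ≥0, ∀ x ∈ s, ∀ p ∈ t, ‖g (x, p)‖ ≤ M := by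
  obtain ⟨M, hM⟩ := (hs.prod ht).exists_bound_of_continuousOn hg.continuousOn
  exact ⟨M.toNNReal, fun x hx p hp => (hM (x, p) ⟨hx, hp⟩).trans (Real.le_coe_toNNReal M)⟩

section PartialDeriv

variable {u : ℝ → ℝ → ℝ}

theorem hasDerivAt_fderiv_uncurry_apply (hu : Differentiable ℝ (uncurry u)) (x p : ℝ) :
    HasDerivAt (u x) (fderiv ℝ (uncurry u) (x, p) (0, 1)) p :=
  (hu (x, p)).hasFDerivAt.comp_hasDerivAt p ((hasDerivAt_const p x).prodMk (hasDerivAt_id p))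

theorem continuous_deriv_of_contDiff_uncurry (hu : ContDiff ℝ 1 (uncurry u)) :
    Continuous fun q : ℝ × ℝ => deriv (u q.1) q.2 :=
  ((hu.continuous_fderiv one_ne_zero).clm_apply continuous_const).congr fun q =>
    (hasDerivAt_fderiv_uncurry_apply (hu.differentiable one_ne_zero) q.1 q.2).deriv.symm

end PartialDeriv

section ParametricIntegral

variable {f : ℝ → ℝ} {K : ℝ≥0} {r₀ a b Cw : ℝ} {u : ℝ → ℝ → ℝ} {w : ℝ → ℝ}

theorem intervalIntegrable_of_abs_le (hab : a ≤ b) (hw : Measurable w)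
    (hCw : ∀ x ∈ Icc a b, |w x| ≤ Cw) : IntervalIntegrable w volume a b := by
  rw [intervalIntegrable_iff_integrableOn_Icc_of_le hab]
  exact Measure.integrableOn_of_bounded (M := Cw) measure_Icc_lt_top.ne hw.aestronglyMeasurable
    ((ae_restrict_iff' measurableSet_Icc).2 (ae_of_all _ hCw))

theorem measurable_deriv_comp_mul (hu : ContDiff ℝ 1 (uncurry u)) (hw : Measurable w) (p : ℝ) :
    Measurable fun x => deriv f (u x p) * deriv (u x) p * w x :=
  (((measurable_deriv f).comp (hu.continuous.comp (.prodMk_left p)).measurable).mul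
    ((continuous_deriv_of_contDiff_uncurry hu).comp (.prodMk_left p)).measurable).mul hw

theorem hasDerivAt_integral_comp_mul (hf : LipschitzWith K f)
    (hd : ∀ y ≠ r₀, DifferentiableAt ℝ f y) (hab : a ≤ b) (hu : ContDiff ℝ 1 (uncurry u))
    (hw : Measurable w) (hCw : ∀ x ∈ Icc a b, |w x| ≤ Cw) {p₀ : ℝ}
    (hfin : {x ∈ Icc a b | u x p₀ = r₀}.Finite) :
    HasDerivAt (fun p => ∫ x in a..b, f (u x p) * w x)
      (∫ x in a..b, deriv f (u x p₀) * deriv (u x) p₀ * w x) p₀ := by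
  have hIcc : Ι a b ⊆ Icc a b := uIoc_of_le hab ▸ Ioc_subset_Icc_self
  have hux : ∀ x, Differentiable ℝ (u x) := fun x =>
    (hu.differentiable one_ne_zero).comp ((differentiable_const x).prodMk differentiable_id)
  have hfu : ∀ p, Continuous fun x => f (u x p) := fun p =>
    hf.continuous.comp (hu.continuous.comp (.prodMk_left p))
  obtain ⟨M, hM⟩ := isCompact_Icc.exists_nnreal_bound_prod
    (continuous_deriv_of_contDiff_uncurry hu) (isCompact_closedBall p₀ 1)
  have h_lip : ∀ x ∈ Ι a b, LipschitzOnWith (Cw.toNNReal * (K * M))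
      (fun p => f (u x p) * w x) (closedBall p₀ 1) := by
    intro x hx
    have hux_lip : LipschitzOnWith M (u x) (closedBall p₀ 1) :=
      (convex_closedBall p₀ 1).lipschitzOnWith_of_nnnorm_deriv_le (fun p _ => hux x p)
        fun p hp => hM x (hIcc hx) p hp
    have hwx : ‖w x‖₊ ≤ Cw.toNNReal := by
      rw [← NNReal.coe_le_coe, coe_nnnorm, Real.coe_toNNReal']
      exact (hCw x (hIcc hx)).trans (le_max_left _ _)
    simpa only [smul_eq_mul, mul_comm (w x), comp_def] using
      ((lipschitzWith_smul (w x)).comp_lipschitzOnWith (hf.comp_lipschitzOnWith hux_lip)).weaken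
        (mul_le_mul_left hwx _)
  refine (intervalIntegral.hasDerivAt_integral_of_dominated_loc_of_lip
    (bound := fun _ => (Cw.toNNReal * (K * M) : ℝ≥0)) (closedBall_mem_nhds p₀ one_pos) ?_ ?_
    (measurable_deriv_comp_mul hu hw p₀).aestronglyMeasurable ?_ intervalIntegrable_const ?_).2
  · exact .of_forall fun p => ((hfu p).measurable.mul hw).aestronglyMeasurable
  · exact (intervalIntegrable_of_abs_le hab hw hCw).continuousOn_mul (hfu p₀).continuousOn
  · exact ae_of_all _ fun x hx => by simpa only [Real.nnabs_coe] using h_lip x hx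
  · filter_upwards [hfin.countable.ae_notMem volume] with x hx hxI
    have hne : u x p₀ ≠ r₀ := fun h => hx ⟨hIcc hxI, h⟩
    exact ((hd _ hne).hasDerivAt.comp p₀ (hux x p₀).hasDerivAt).mul_const (w x)

theorem continuous_integral_deriv_comp_mul (hf : LipschitzWith K f)
    (hfc : ContinuousOn (deriv f) {r₀}ᶜ) (hab : a ≤ b) (hu : ContDiff ℝ 1 (uncurry u))
    (hw : Measurable w) (hCw : ∀ x ∈ Icc a b, |w x| ≤ Cw)
    (hfin : ∀ p, {x ∈ Icc a b | u x p = r₀}.Finite) :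
    Continuous fun p => ∫ x in a..b, deriv f (u x p) * deriv (u x) p * w x := by
  have hIcc : Ι a b ⊆ Icc a b := uIoc_of_le hab ▸ Ioc_subset_Icc_self
  have hpartial := continuous_deriv_of_contDiff_uncurry hu
  refine continuous_iff_continuousAt.2 fun p₀ => ?_
  obtain ⟨M, hM⟩ := isCompact_Icc.exists_nnreal_bound_prod hpartial (isCompact_closedBall p₀ 1)
  refine intervalIntegral.continuousAt_of_dominated_interval (bound := fun _ => K * M * Cw)
    (.of_forall fun p => (measurable_deriv_comp_mul hu hw p).aestronglyMeasurable) ?_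
    intervalIntegrable_const ?_
  · filter_upwards [closedBall_mem_nhds p₀ one_pos] with p hp
    refine ae_of_all _ fun x hx => ?_
    rw [norm_mul, norm_mul]
    exact mul_le_mul (mul_le_mul (norm_deriv_le_of_lipschitz hf) (hM x (hIcc hx) p hp)
      (norm_nonneg _) K.2) (hCw x (hIcc hx)) (norm_nonneg _) (by positivity)
  · filter_upwards [(hfin p₀).countable.ae_notMem volume] with x hx hxI
    have hne : u x p₀ ≠ r₀ := fun h => hx ⟨hIcc hxI, h⟩
    exact (((hfc.continuousAt (isOpen_compl_singleton.mem_nhds hne)).comp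
      (hu.continuous.comp (.prodMk_right x)).continuousAt).mul
      (hpartial.comp (.prodMk_right x)).continuousAt).mul continuousAt_const

end ParametricIntegral

theorem stmt12 (r₀ : ℝ) (f : ℝ → ℝ) (hf : Continuous f)
    (hf1 : ∀ x : ℝ, x ≠ r₀ → DifferentiableAt ℝ f x)
    (hfc : ContinuousOn (deriv f) {r₀}ᶜ)
    (C : ℝ) (hC : ∀ x : ℝ, x ≠ r₀ → |deriv f x| ≤ C)
    (a b : ℝ) (hab : a ≤ b)
    (u : ℝ → ℝ → ℝ) (hu : ContDiff ℝ 1 (fun p : ℝ × ℝ => u p.1 p.2))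
    (w : ℝ → ℝ) (hw : Measurable w) (Cw : ℝ) (hCw : ∀ x ∈ Set.Icc a b, |w x| ≤ Cw)
    (hfin : ∀ p : ℝ, {x ∈ Set.Icc a b | u x p = r₀}.Finite) :
    ContDiff ℝ 1 (fun p : ℝ => ∫ x in a..b, f (u x p) * w x) ∧
    ∀ p : ℝ, deriv (fun p : ℝ => ∫ x in a..b, f (u x p) * w x) p
        = ∫ x in a..b, deriv f (u x p) * deriv (fun q => u x q) p * w x := by
  have hlip := lipschitzWith_of_abs_deriv_le_of_ne hf hf1 hC
  have hG := fun p => hasDerivAt_integral_comp_mul hlip hf1 hab hu hw hCw (hfin p)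
  refine ⟨contDiff_one_iff_deriv.2 ⟨fun p => (hG p).differentiableAt, ?_⟩, fun p => (hG p).deriv⟩
  exact (continuous_integral_deriv_comp_mul hlip hfc hab hu hw hCw hfin).congr
    fun p => (hG p).deriv.symm
end

section
/- Let f satisfy: f continuous, strictly increasing, f(0)=0, f piecewise C¹ with finitely many non-differentiability points none of which is 0. Let j, k be positive integers. Then the functions ψ₁(y,z) = (2/π)∫₀^π [f(y sin(jx)+z sin(kx)) + f(y sin(jx)-z sin(kx))] sin(jx) dx and ψ₂(y,z) = (2/π)∫₀^π [f(y sin(jx)+z sin(kx)) - f(y sin(jx)-z sin(kx))] sin(kx) dx are of class C¹ on ℝ². -/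
/-! The integrands have the form `f (φ x p) * w x` with `φ x = (p ↦ p.1 sin (j x) ± p.2 sin (k x))`
linear in `p`. Since `f'` has one-sided limits everywhere it is bounded on compact sets, so `f` is
locally Lipschitz and one may differentiate under the integral sign. For fixed `p`, `x ↦ φ x p` is
analytic and vanishes at `x = 0 ∉ S`, so it meets the finite set `S` only on a null set; hence for
almost every `x` the integrand is differentiable in `p` with derivative `f' (φ x p) * w x • φ x`,
and continuity of `f'` off `S` plus dominated convergence make this derivative continuous in `p`. -/

open Real Set Filter MeasureTheory intervalIntegral Metric
open scoped Topology Interval NNReal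

theorem lipschitzOnWith_of_abs_deriv_le {f : ℝ → ℝ} {S : Set ℝ} (hS : S.Countable)
    (hf : Continuous f) (hdiff : ∀ x ∉ S, DifferentiableAt ℝ f x) {s : Set ℝ}
    (hs : s.OrdConnected) {C : ℝ≥0} (hC : ∀ x ∈ s, |deriv f x| ≤ C) :
    LipschitzOnWith C f s := by
  refine LipschitzOnWith.of_dist_le_mul fun y hy x hx => ?_
  have hbound : ∀ t ∈ [[x, y]], ‖deriv f t‖ ≤ C := fun t ht => hC t (hs.uIcc_subset hx hy ht)
  have hint : IntervalIntegrable (deriv f) volume x y :=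
    intervalIntegrable_const.mono_fun' (measurable_deriv f).aestronglyMeasurable
      ((ae_restrict_iff' measurableSet_uIoc).2 <| ae_of_all _ fun t ht =>
        hbound t (uIoc_subset_uIcc ht))
  have hftc : ∫ t in x..y, deriv f t = f y - f x :=
    integral_eq_of_hasDerivAt_off_countable f (deriv f) hS hf.continuousOn
      (fun t ht => (hdiff t ht.2).hasDerivAt) hint
  rw [dist_eq, dist_eq, ← hftc]
  exact norm_integral_le_of_norm_le_const fun t ht => hbound t (uIoc_subset_uIcc ht)

theorem exists_eventually_abs_le_of_tendsto_nhdsGT_nhdsLT {g : ℝ → ℝ} {x L L' : ℝ}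
    (hr : Tendsto g (𝓝[>] x) (𝓝 L)) (hl : Tendsto g (𝓝[<] x) (𝓝 L')) :
    ∃ M, ∀ᶠ y in 𝓝 x, |g y| ≤ M := by
  obtain ⟨M₁, h₁⟩ := hl.abs.isBoundedUnder_le
  obtain ⟨M₂, h₂⟩ := hr.abs.isBoundedUnder_le
  refine ⟨max (max M₁ M₂) |g x|, ?_⟩
  rw [← nhdsNE_sup_pure, ← nhdsLT_sup_nhdsGT]
  refine eventually_sup.2 ⟨eventually_sup.2 ⟨?_, ?_⟩, eventually_pure.2 (le_max_right _ _)⟩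
  · exact (eventually_map.1 h₁).mono fun y hy =>
      hy.trans ((le_max_left _ _).trans (le_max_left _ _))
  · exact (eventually_map.1 h₂).mono fun y hy =>
      hy.trans ((le_max_right _ _).trans (le_max_left _ _))

theorem IsCompact.exists_bound_of_tendsto_nhdsGT_nhdsLT {g : ℝ → ℝ} {K : Set ℝ}
    (hK : IsCompact K)
    (h : ∀ x ∈ K, (∃ L, Tendsto g (𝓝[>] x) (𝓝 L)) ∧ ∃ L, Tendsto g (𝓝[<] x) (𝓝 L)) :
    ∃ C, ∀ y ∈ K, |g y| ≤ C := by
  refine hK.induction_on (p := fun s => ∃ C, ∀ y ∈ s, |g y| ≤ C) ⟨0, by simp⟩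
    (fun s t hst ⟨C, hC⟩ => ⟨C, fun y hy => hC y (hst hy)⟩)
    (fun s t ⟨C, hC⟩ ⟨C', hC'⟩ => ⟨max C C', fun y hy => hy.elim
      (fun hy => (hC y hy).trans (le_max_left _ _))
      (fun hy => (hC' y hy).trans (le_max_right _ _))⟩)
    fun x hx => ?_
  obtain ⟨⟨L, hL⟩, ⟨L', hL'⟩⟩ := h x hx
  obtain ⟨M, hM⟩ := exists_eventually_abs_le_of_tendsto_nhdsGT_nhdsLT hL hL'
  exact ⟨{y | |g y| ≤ M}, mem_nhdsWithin_of_mem_nhds hM, M, fun y hy => hy⟩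

theorem IsCompact.exists_bound_of_continuousOn_compl_finite {g : ℝ → ℝ} {S K : Set ℝ}
    (hK : IsCompact K) (hS : S.Finite) (hg : ContinuousOn g Sᶜ)
    (hlim : ∀ r ∈ S, (∃ L, Tendsto g (𝓝[>] r) (𝓝 L)) ∧ ∃ L, Tendsto g (𝓝[<] r) (𝓝 L)) :
    ∃ C, ∀ y ∈ K, |g y| ≤ C := by
  refine hK.exists_bound_of_tendsto_nhdsGT_nhdsLT fun x _ => ?_
  by_cases hx : x ∈ S
  · exact hlim x hx
  · have hx := (hg.continuousAt (hS.isClosed.isOpen_compl.mem_nhds hx)).tendsto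
    exact ⟨⟨_, hx.mono_left nhdsWithin_le_nhds⟩, ⟨_, hx.mono_left nhdsWithin_le_nhds⟩⟩

theorem ae_notMem_of_analyticAt {g : ℝ → ℝ} (hg : ∀ x, AnalyticAt ℝ g x) {S : Set ℝ}
    (hS : S.Countable) {x₀ : ℝ} (hx₀ : g x₀ ∉ S) : ∀ᵐ x, g x ∉ S := by
  have hr : ∀ r ∈ S, ∀ᵐ x, g x ≠ r := fun r hr => by
    have hcod : (fun x => g x - r) ⁻¹' {0}ᶜ ∈ codiscrete ℝ :=
      AnalyticOnNhd.preimage_zero_mem_codiscrete (x := x₀)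
        (fun x _ => (hg x).sub analyticAt_const) (sub_ne_zero.2 fun h => hx₀ (h ▸ hr))
    have hae : (fun x => g x - r) ⁻¹' {0}ᶜ ∈ ae volume := by
      simpa only [Measure.restrict_univ] using
        ae_restrict_le_codiscreteWithin (μ := volume) MeasurableSet.univ hcod
    filter_upwards [hae] with x hx
    exact sub_ne_zero.1 hx
  exact ((ae_ball_iff hS).2 hr).mono fun x hx hxS => hx _ hxS rfl

section ParametricIntegral

variable {E : Type*} [NormedAddCommGroup E] [NormedSpace ℝ E] {f : ℝ → ℝ} {S : Set ℝ}
  {φ : ℝ → E →L[ℝ] ℝ} {w : ℝ → ℝ} {a b : ℝ}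

theorem exists_apply_mem_Icc_of_mem_ball (hφ : Continuous φ) (p₀ : E) :
    ∃ R, ∀ p ∈ ball p₀ 1, ∀ x ∈ [[a, b]], φ x p ∈ Icc (-R) R := by
  obtain ⟨M, hM⟩ := (isCompact_uIcc (a := a) (b := b)).exists_bound_of_continuousOn hφ.continuousOn
  refine ⟨M * (‖p₀‖ + 1), fun p hp x hx => abs_le.1 ?_⟩
  have hp : ‖p‖ ≤ ‖p₀‖ + 1 := by
    have := norm_le_norm_add_norm_sub' p p₀
    rw [← dist_eq_norm] at this
    linarith [mem_ball.1 hp]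
  calc |φ x p| ≤ ‖φ x‖ * ‖p‖ := (φ x).le_opNorm p
    _ ≤ M * (‖p₀‖ + 1) := mul_le_mul (hM x hx) hp (norm_nonneg _) ((norm_nonneg _).trans (hM x hx))

theorem hasFDerivAt_intervalIntegral_comp_clm (hf : Continuous f) (hS : S.Countable)
    (hdiff : ∀ y ∉ S, DifferentiableAt ℝ f y)
    (hbdd : ∀ R, ∃ C, ∀ y ∈ Icc (-R) R, |deriv f y| ≤ C)
    (hφ : Continuous φ) (hw : Continuous w) (hφS : ∀ p, ∀ᵐ x, φ x p ∉ S) (p₀ : E) :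
    HasFDerivAt (fun p => ∫ x in a..b, f (φ x p) * w x)
      (∫ x in a..b, (deriv f (φ x p₀) * w x) • φ x) p₀ := by
  obtain ⟨R, hR⟩ := exists_apply_mem_Icc_of_mem_ball (a := a) (b := b) hφ p₀
  obtain ⟨C, hC⟩ := hbdd R
  have hlip : LipschitzOnWith C.toNNReal f (Icc (-R) R) :=
    lipschitzOnWith_of_abs_deriv_le hS hf hdiff ordConnected_Icc fun y hy =>
      (hC y hy).trans (le_coe_toNNReal C)
  have hF_lip : ∀ x ∈ Ι a b, LipschitzOnWith (C.toNNReal * ‖φ x‖₊ * ‖w x‖₊)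
      (fun p => f (φ x p) * w x) (ball p₀ 1) := fun x hx => by
    refine LipschitzOnWith.of_dist_le_mul fun p hp q hq => ?_
    have hx' := uIoc_subset_uIcc hx
    calc dist (f (φ x p) * w x) (f (φ x q) * w x) = dist (f (φ x p)) (f (φ x q)) * ‖w x‖ := by
          simp only [dist_eq, ← sub_mul, abs_mul, Real.norm_eq_abs]
      _ ≤ C.toNNReal * dist (φ x p) (φ x q) * ‖w x‖ := by
          gcongr; exact hlip.dist_le_mul _ (hR p hp x hx') _ (hR q hq x hx')
      _ ≤ C.toNNReal * (‖φ x‖ * dist p q) * ‖w x‖ := by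
          gcongr; exact (φ x).lipschitz.dist_le_mul p q
      _ = _ := by push_cast; ring
  have hF'_diff : ∀ x, φ x p₀ ∉ S → HasFDerivAt (fun p => f (φ x p) * w x)
      ((deriv f (φ x p₀) * w x) • φ x) p₀ := fun x hx => by
    have := ((hdiff _ hx).hasDerivAt.comp_hasFDerivAt p₀ (φ x).hasFDerivAt).mul_const (w x)
    rwa [smul_smul, mul_comm] at this
  have hφp : ∀ p, Continuous fun x => φ x p := fun p => hφ.clm_apply continuous_const
  refine (hasFDerivAt_integral_of_dominated_loc_of_lip (ball_mem_nhds p₀ one_pos)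
    (F := fun p x => f (φ x p) * w x)
    (bound := fun x => ((C.toNNReal * ‖φ x‖₊ * ‖w x‖₊ : ℝ≥0) : ℝ))
    (Eventually.of_forall fun p => ((hf.comp (hφp p)).mul hw).aestronglyMeasurable)
    (((hf.comp (hφp p₀)).mul hw).intervalIntegrable a b)
    ((((measurable_deriv f).comp_aemeasurable (hφp p₀).aemeasurable).aestronglyMeasurable.mul
      hw.aestronglyMeasurable).smul hφ.aestronglyMeasurable)
    (ae_of_all _ fun x hx => by simpa only [Real.nnabs_coe] using hF_lip x hx)
    ?_ ((hφS p₀).mono fun x hx _ => hF'_diff x hx)).2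
  exact (NNReal.continuous_coe.comp ((continuous_const.mul hφ.nnnorm).mul
    hw.nnnorm)).intervalIntegrable a b

theorem continuous_intervalIntegral_deriv_comp_clm (hcont : ∀ y ∉ S, ContinuousAt (deriv f) y)
    (hbdd : ∀ R, ∃ C, ∀ y ∈ Icc (-R) R, |deriv f y| ≤ C)
    (hφ : Continuous φ) (hw : Continuous w) (hφS : ∀ p, ∀ᵐ x, φ x p ∉ S) :
    Continuous fun p => ∫ x in a..b, (deriv f (φ x p) * w x) • φ x := by
  refine continuous_iff_continuousAt.2 fun p₀ => ?_
  obtain ⟨R, hR⟩ := exists_apply_mem_Icc_of_mem_ball (a := a) (b := b) hφ p₀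
  obtain ⟨C, hC⟩ := hbdd R
  refine continuousAt_of_dominated_interval (bound := fun x => C * (|w x| * ‖φ x‖))
    (Eventually.of_forall fun p => ((((measurable_deriv f).comp_aemeasurable
      (hφ.clm_apply continuous_const).aemeasurable).aestronglyMeasurable.mul
      hw.aestronglyMeasurable).smul hφ.aestronglyMeasurable)) ?_
    ((continuous_const.mul (hw.abs.mul hφ.norm)).intervalIntegrable a b) ?_
  · filter_upwards [ball_mem_nhds p₀ one_pos] with p hp
    refine ae_of_all _ fun x hx => ?_
    rw [norm_smul, norm_mul, Real.norm_eq_abs, Real.norm_eq_abs, mul_assoc]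
    gcongr
    exact hC _ (hR p hp x (uIoc_subset_uIcc hx))
  · filter_upwards [hφS p₀] with x hx _
    exact (((hcont _ hx).comp (φ x).continuous.continuousAt).mul continuousAt_const).smul
      continuousAt_const

theorem contDiff_intervalIntegral_comp_clm (hf : Continuous f) (hS : S.Countable)
    (hdiff : ∀ y ∉ S, DifferentiableAt ℝ f y) (hcont : ∀ y ∉ S, ContinuousAt (deriv f) y)
    (hbdd : ∀ R, ∃ C, ∀ y ∈ Icc (-R) R, |deriv f y| ≤ C)
    (hφ : Continuous φ) (hw : Continuous w) (hφS : ∀ p, ∀ᵐ x, φ x p ∉ S) :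
    ContDiff ℝ 1 fun p => ∫ x in a..b, f (φ x p) * w x := by
  have hderiv := hasFDerivAt_intervalIntegral_comp_clm (a := a) (b := b) hf hS hdiff hbdd hφ hw hφS
  rw [contDiff_one_iff_fderiv, funext fun p => (hderiv p).fderiv]
  exact ⟨fun p => (hderiv p).differentiableAt,
    continuous_intervalIntegral_deriv_comp_clm hcont hbdd hφ hw hφS⟩

end ParametricIntegral

theorem contDiff_intervalIntegral_comp_analytic {f : ℝ → ℝ} {S : Set ℝ} {a b : ℝ}
    (hf : Continuous f) (hS : S.Countable) (hdiff : ∀ y ∉ S, DifferentiableAt ℝ f y)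
    (hcont : ∀ y ∉ S, ContinuousAt (deriv f) y)
    (hbdd : ∀ R, ∃ C, ∀ y ∈ Icc (-R) R, |deriv f y| ≤ C) {u v w : ℝ → ℝ}
    (hu : ∀ x, AnalyticAt ℝ u x) (hv : ∀ x, AnalyticAt ℝ v x) (hw : Continuous w) {x₀ : ℝ}
    (hu₀ : u x₀ = 0) (hv₀ : v x₀ = 0) (hS₀ : 0 ∉ S) :
    ContDiff ℝ 1 fun p : ℝ × ℝ => ∫ x in a..b, f (p.1 * u x + p.2 * v x) * w x := by
  set φ : ℝ → ℝ × ℝ →L[ℝ] ℝ :=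
    fun x => u x • ContinuousLinearMap.fst ℝ ℝ ℝ + v x • ContinuousLinearMap.snd ℝ ℝ ℝ
  have hφ_apply : ∀ x p, φ x p = p.1 * u x + p.2 * v x := fun x p => by simp [φ, mul_comm]
  have hφ : Continuous φ :=
    ((AnalyticOnNhd.continuous fun x _ => hu x).smul continuous_const).add
      ((AnalyticOnNhd.continuous fun x _ => hv x).smul continuous_const)
  have hφS : ∀ p, ∀ᵐ x, φ x p ∉ S := fun p => by
    simpa only [hφ_apply] using ae_notMem_of_analyticAt (g := fun x => p.1 * u x + p.2 * v x)
      (fun x => (analyticAt_const.mul (hu x)).add (analyticAt_const.mul (hv x))) hS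
      (x₀ := x₀) (by simpa [hu₀, hv₀] using hS₀)
  simpa only [hφ_apply] using contDiff_intervalIntegral_comp_clm hf hS hdiff hcont hbdd hφ hw hφS

theorem stmt13_general (f : ℝ → ℝ) (hf : Continuous f)
    (S : Finset ℝ) (hS0 : (0:ℝ) ∉ S)
    (hdiff : ∀ x ∉ (S : Set ℝ), DifferentiableAt ℝ f x)
    (hcont : ContinuousOn (deriv f) ((S : Set ℝ))ᶜ)
    (hlim : ∀ r ∈ S,
      (∃ L : ℝ, Filter.Tendsto (deriv f) (nhdsWithin r (Set.Ioi r)) (nhds L)) ∧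
      (∃ L : ℝ, Filter.Tendsto (deriv f) (nhdsWithin r (Set.Iio r)) (nhds L)))
    (j k : ℕ) :
    ContDiff ℝ 1 (fun p : ℝ × ℝ =>
      (2 / π) * ∫ x in (0:ℝ)..π,
        (f (p.1 * Real.sin (j * x) + p.2 * Real.sin (k * x))
          + f (p.1 * Real.sin (j * x) - p.2 * Real.sin (k * x))) * Real.sin (j * x)) ∧
    ContDiff ℝ 1 (fun p : ℝ × ℝ =>
      (2 / π) * ∫ x in (0:ℝ)..π,
        (f (p.1 * Real.sin (j * x) + p.2 * Real.sin (k * x))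
          - f (p.1 * Real.sin (j * x) - p.2 * Real.sin (k * x))) * Real.sin (k * x)) := by
  have hcontAt : ∀ y ∉ (S : Set ℝ), ContinuousAt (deriv f) y := fun y hy =>
    hcont.continuousAt (S.finite_toSet.isClosed.isOpen_compl.mem_nhds hy)
  have hbdd : ∀ R, ∃ C, ∀ y ∈ Icc (-R) R, |deriv f y| ≤ C := fun R =>
    isCompact_Icc.exists_bound_of_continuousOn_compl_finite S.finite_toSet hcont hlim
  have hsin : ∀ (n : ℕ) x, AnalyticAt ℝ (fun x => sin (n * x)) x := fun n x =>
    analyticAt_sin.comp (analyticAt_const.mul analyticAt_id)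
  have hI : ∀ {v w : ℝ → ℝ}, (∀ x, AnalyticAt ℝ v x) → v 0 = 0 → Continuous w →
      ContDiff ℝ 1 fun p : ℝ × ℝ => ∫ x in (0)..π, f (p.1 * sin (j * x) + p.2 * v x) * w x :=
    fun hv hv₀ hw => contDiff_intervalIntegral_comp_analytic hf S.countable_toSet hdiff hcontAt
      hbdd (hsin j) hv hw (by simp) hv₀ hS0
  have hint : ∀ {v w : ℝ → ℝ}, Continuous v → Continuous w → ∀ p : ℝ × ℝ,
      IntervalIntegrable (fun x => f (p.1 * sin (j * x) + p.2 * v x) * w x) volume 0 π :=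
    fun hv hw p => Continuous.intervalIntegrable (by fun_prop) 0 π
  have hsinc : ∀ n : ℕ, Continuous fun x : ℝ => sin (n * x) := fun n => by fun_prop
  -- The two sides reach the normed group structure of `ℝ` through different instance paths.
  constructor
  · convert (config := { transparency := .instances }) contDiff_const.mul
      ((hI (hsin k) (by simp) (hsinc j)).add (hI (fun x => (hsin k x).neg) (by simp) (hsinc j)))
      using 3
    rw [← integral_add (hint (hsinc k) (hsinc j) _) (hint (hsinc k).neg (hsinc j) _)]
    simp only [Pi.neg_apply, mul_neg, ← sub_eq_add_neg, add_mul]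
  · convert (config := { transparency := .instances }) contDiff_const.mul
      ((hI (hsin k) (by simp) (hsinc k)).sub (hI (fun x => (hsin k x).neg) (by simp) (hsinc k)))
      using 3
    rw [← integral_sub (hint (hsinc k) (hsinc k) _) (hint (hsinc k).neg (hsinc k) _)]
    simp only [Pi.neg_apply, mul_neg, ← sub_eq_add_neg, sub_mul]

theorem stmt13 (f : ℝ → ℝ) (hf : Continuous f) (hmono : StrictMono f) (h0 : f 0 = 0)
    (S : Finset ℝ) (hS0 : (0:ℝ) ∉ S)
    (hdiff : ∀ x ∉ (S : Set ℝ), DifferentiableAt ℝ f x)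
    (hcont : ContinuousOn (deriv f) ((S : Set ℝ))ᶜ)
    (hlim : ∀ r ∈ S,
      (∃ L : ℝ, Filter.Tendsto (deriv f) (nhdsWithin r (Set.Ioi r)) (nhds L)) ∧
      (∃ L : ℝ, Filter.Tendsto (deriv f) (nhdsWithin r (Set.Iio r)) (nhds L)))
    (hderiv0 : 0 < deriv f 0)
    (j k : ℕ) (hj : 0 < j) (hk : 0 < k) :
    ContDiff ℝ 1 (fun p : ℝ × ℝ =>
      (2 / π) * ∫ x in (0:ℝ)..π,
        (f (p.1 * Real.sin (j * x) + p.2 * Real.sin (k * x))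
          + f (p.1 * Real.sin (j * x) - p.2 * Real.sin (k * x))) * Real.sin (j * x)) ∧
    ContDiff ℝ 1 (fun p : ℝ × ℝ =>
      (2 / π) * ∫ x in (0:ℝ)..π,
        (f (p.1 * Real.sin (j * x) + p.2 * Real.sin (k * x))
          - f (p.1 * Real.sin (j * x) - p.2 * Real.sin (k * x))) * Real.sin (k * x)) :=
  stmt13_general f hf S hS0 hdiff hcont hlim j k
end

section
/- Let m, r₀ > 0 and f(r) = m[(r + r₀)⁺ − r₀] (the MMK slackening function). Then the transform f̃(r) = (2/π)∫₀^π f(r sin x) sin x dx satisfies f̃(r) = m r for r ≥ −r₀, and f̃(r) = −(2m r₀/π)[(r/r₀) arcsin(r₀/r) + √(1 − (r₀/r)²)] for r ≤ −r₀. -/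
open Real

/- For `r ≥ -r₀` the argument `r sin x` never drops below `-r₀`, so `f` acts linearly and
`f̃(r) = m r · (2/π)∫₀^π sin² = m r`. For `r ≤ -r₀` put `a = arcsin(-r₀/r) ∈ [0, π/2]`: then
`r sin x ≤ -r₀` exactly on `[a, π - a]`, where `f` is the constant `-m r₀`, and `f` is linear on the
two outer pieces, which contribute equally by the symmetry `x ↦ π - x`. -/

def slackening (m r₀ r : ℝ) : ℝ := m * (max (r + r₀) 0 - r₀)

noncomputable def slackeningTransform (m r₀ r : ℝ) : ℝ :=
  (2 / π) * ∫ x in (0:ℝ)..π, slackening m r₀ (r * sin x) * sin x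

lemma integral_comp_sin_pi_sub (g : ℝ → ℝ) (a : ℝ) :
    ∫ x in (π - a)..π, g (sin x) = ∫ x in (0:ℝ)..a, g (sin x) := by
  simpa only [sin_pi_sub, sub_zero] using
    (intervalIntegral.integral_comp_sub_left (fun x => g (sin x)) (a := 0) (b := a) π).symm

lemma sin_le_sin_of_mem_Icc_pi_sub {a x : ℝ} (ha₀ : -(π / 2) ≤ a) (hax : a ≤ x)
    (hxa : x ≤ π - a) : sin a ≤ sin x := by
  rcases le_or_gt x (π / 2) with hx | hx
  · exact sin_le_sin_of_le_of_le_pi_div_two ha₀ hx hax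
  · rw [← sin_pi_sub x]
    exact sin_le_sin_of_le_of_le_pi_div_two ha₀ (by linarith) (by linarith)

section

variable {m r₀ r : ℝ}

lemma slackening_of_neg_le (h : -r₀ ≤ r) : slackening m r₀ r = m * r := by
  rw [slackening, max_eq_left (by linarith)]
  ring

lemma slackening_of_le_neg (h : r ≤ -r₀) : slackening m r₀ r = -(m * r₀) := by
  rw [slackening, max_eq_right (by linarith)]
  ring

lemma integral_slackening_mul_sin_of_neg_le {u v : ℝ} (huv : u ≤ v)
    (h : ∀ x ∈ Set.Icc u v, -r₀ ≤ r * sin x) :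
    ∫ x in u..v, slackening m r₀ (r * sin x) * sin x = m * r * ∫ x in u..v, sin x ^ 2 := by
  rw [← intervalIntegral.integral_const_mul]
  refine intervalIntegral.integral_congr fun x hx => ?_
  rw [Set.uIcc_of_le huv] at hx
  simp only [slackening_of_neg_le (h x hx)]
  ring

lemma integral_slackening_mul_sin_of_le_neg {u v : ℝ} (huv : u ≤ v)
    (h : ∀ x ∈ Set.Icc u v, r * sin x ≤ -r₀) :
    ∫ x in u..v, slackening m r₀ (r * sin x) * sin x = -(m * r₀) * ∫ x in u..v, sin x := by
  rw [← intervalIntegral.integral_const_mul]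
  refine intervalIntegral.integral_congr fun x hx => ?_
  rw [Set.uIcc_of_le huv] at hx
  simp only [slackening_of_le_neg (h x hx)]

lemma slackeningTransform_of_neg_le (hr₀ : 0 ≤ r₀) (hr : -r₀ ≤ r) :
    slackeningTransform m r₀ r = m * r := by
  have h : ∀ x ∈ Set.Icc 0 π, -r₀ ≤ r * sin x := fun x hx => by
    nlinarith [sin_nonneg_of_nonneg_of_le_pi hx.1 hx.2, sin_le_one x]
  rw [slackeningTransform, integral_slackening_mul_sin_of_neg_le pi_pos.le h, integral_sin_sq]
  simp only [sin_zero, sin_pi, zero_mul, sub_zero, zero_add]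
  field_simp

lemma integral_slackening_mul_sin_of_sin_eq {a : ℝ} (hr : r < 0) (ha₀ : 0 ≤ a) (ha : a ≤ π / 2)
    (hra : r * sin a = -r₀) :
    ∫ x in (0:ℝ)..π, slackening m r₀ (r * sin x) * sin x
      = m * r * a - m * r₀ * cos a := by
  set F := fun x => slackening m r₀ (r * sin x) * sin x
  have hF : ∀ u v, IntervalIntegrable F MeasureTheory.volume u v := fun u v =>
    (by unfold F slackening; fun_prop : Continuous F).intervalIntegrable u v
  have outer : ∀ x ∈ Set.Icc 0 a, -r₀ ≤ r * sin x := fun x hx => by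
    nlinarith [sin_le_sin_of_le_of_le_pi_div_two (by linarith [hx.1]) ha hx.2]
  have inner : ∀ x ∈ Set.Icc a (π - a), r * sin x ≤ -r₀ := fun x hx => by
    nlinarith [sin_le_sin_of_mem_Icc_pi_sub (by linarith) hx.1 hx.2]
  calc ∫ x in (0:ℝ)..π, F x
      = (∫ x in (0:ℝ)..a, F x) + (∫ x in a..π - a, F x) + ∫ x in (π - a)..π, F x := by
        rw [intervalIntegral.integral_add_adjacent_intervals (hF _ _) (hF _ _),
          intervalIntegral.integral_add_adjacent_intervals (hF _ _) (hF _ _)]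
    _ = 2 * (∫ x in (0:ℝ)..a, F x) + ∫ x in a..π - a, F x := by
        rw [integral_comp_sin_pi_sub (fun t => slackening m r₀ (r * t) * t)]
        ring
    _ = 2 * (m * r * ∫ x in (0:ℝ)..a, sin x ^ 2) + -(m * r₀) * ∫ x in a..π - a, sin x := by
        rw [integral_slackening_mul_sin_of_neg_le ha₀ outer,
          integral_slackening_mul_sin_of_le_neg (by linarith) inner]
    _ = m * r * a - m * r₀ * cos a := by
        rw [integral_sin_sq, integral_sin, cos_pi_sub]
        simp only [sin_zero, cos_zero, zero_mul]
        linear_combination (-m * cos a) * hra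

lemma slackeningTransform_of_le_neg (hr₀ : 0 < r₀) (hr : r ≤ -r₀) :
    slackeningTransform m r₀ r
      = -(2 * m * r₀ / π) * ((r / r₀) * arcsin (r₀ / r) + √(1 - (r₀ / r) ^ 2)) := by
  have hr_neg : r < 0 := by linarith
  have hq : -1 ≤ r₀ / r := by rw [le_div_iff_of_neg hr_neg]; linarith
  have hq' : r₀ / r ≤ 0 := div_nonpos_of_nonneg_of_nonpos hr₀.le hr_neg.le
  have hsin : r * sin (-arcsin (r₀ / r)) = -r₀ := by
    rw [sin_neg, sin_arcsin hq (by linarith), mul_neg, mul_div_cancel₀ _ hr_neg.ne]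
  rw [slackeningTransform, integral_slackening_mul_sin_of_sin_eq hr_neg
    (neg_nonneg.2 (arcsin_nonpos.2 hq')) (by linarith [neg_pi_div_two_le_arcsin (r₀ / r)]) hsin,
    cos_neg, cos_arcsin]
  field_simp
  ring

end

theorem stmt19_general (m r₀ : ℝ) (hr₀ : 0 < r₀) (r : ℝ) :
    (-r₀ ≤ r →
      (2 / π) * ∫ x in (0:ℝ)..π,
          (m * (max (r * Real.sin x + r₀) 0 - r₀)) * Real.sin x = m * r) ∧
    (r ≤ -r₀ →
      (2 / π) * ∫ x in (0:ℝ)..π,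
          (m * (max (r * Real.sin x + r₀) 0 - r₀)) * Real.sin x
        = -(2 * m * r₀ / π) *
            ((r / r₀) * Real.arcsin (r₀ / r) + Real.sqrt (1 - (r₀ / r) ^ 2))) :=
  ⟨slackeningTransform_of_neg_le (m := m) hr₀.le, slackeningTransform_of_le_neg (m := m) hr₀⟩

theorem stmt19 (m r₀ : ℝ) (hm : 0 < m) (hr₀ : 0 < r₀) (r : ℝ) :
    (-r₀ ≤ r →
      (2 / π) * ∫ x in (0:ℝ)..π,
          (m * (max (r * Real.sin x + r₀) 0 - r₀)) * Real.sin x = m * r) ∧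
    (r ≤ -r₀ →
      (2 / π) * ∫ x in (0:ℝ)..π,
          (m * (max (r * Real.sin x + r₀) 0 - r₀)) * Real.sin x
        = -(2 * m * r₀ / π) *
            ((r / r₀) * Real.arcsin (r₀ / r) + Real.sqrt (1 - (r₀ / r) ^ 2))) :=
  stmt19_general m r₀ hr₀ r
end
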